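/- Let f be a fractional perfect matching on a forest taking values in {0, 1/d, ..., 1}, and let (x_n) be a ray in supp(f) with each x_{2n} of supp(f)-degree 2. Define w(n) = f(x_{2n}, x_{2n+1}). Then for each n: if x_{2n+1} has supp(f)-degree 2 then w(n+1) = w(n), and if x_{2n+1} has supp(f)-degree greater than 2 then w(n+1) > w(n). -/
import Mathlib

open SimpleGraph Finset

attribute [local instance] Classical.propDecidable

/-- A fractional perfect matching of a locally finite graph: edge values in `[0,1]`
summing to `1` at every vertex. -/
def IsFPM {V : Type*} (G : SimpleGraph V) [G.LocallyFinite] (f : Sym2 V → ℝ) : Prop :=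
  (∀ e, 0 ≤ f e ∧ f e ≤ 1) ∧ ∀ x : V, ∑ y ∈ G.neighborFinset x, f s(x, y) = 1

/-- The support of a fractional perfect matching: the subgraph of edges `e`
with `0 < f e < 1`. -/
def fSupp {V : Type*} (G : SimpleGraph V) (f : Sym2 V → ℝ) : SimpleGraph V :=
  SimpleGraph.fromEdgeSet {e | e ∈ G.edgeSet ∧ 0 < f e ∧ f e < 1}

lemma fSupp_adj {V : Type*} (G : SimpleGraph V) (f : Sym2 V → ℝ) {a b : V} :
    (fSupp G f).Adj a b ↔ G.Adj a b ∧ 0 < f s(a, b) ∧ f s(a, b) < 1 := by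
  simp only [fSupp, SimpleGraph.fromEdgeSet_adj, Set.mem_setOf_eq, SimpleGraph.mem_edgeSet]
  exact ⟨fun ⟨⟨h1, h2⟩, _⟩ => ⟨h1, h2⟩, fun ⟨h1, h2⟩ => ⟨⟨h1, h2⟩, h1.ne⟩⟩

lemma sum_supp {V : Type*} (G : SimpleGraph V) [G.LocallyFinite] (f : Sym2 V → ℝ)
    (hf : IsFPM G f) (v w0 : V) (hw0 : (fSupp G f).Adj v w0) :
    ∑ u ∈ (G.neighborFinset v).filter (fun u => (fSupp G f).Adj v u), f s(v, u) = 1 := by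
  obtain ⟨hGw, hpos, hlt⟩ := (fSupp_adj G f).mp hw0
  have hw0mem : w0 ∈ G.neighborFinset v := by simpa using hGw
  have flt1 : ∀ u ∈ G.neighborFinset v, f s(v, u) < 1 := by
    intro u hu
    by_contra h
    have h1 : f s(v, u) = 1 := le_antisymm (hf.1 _).2 (not_lt.mp h)
    have hne : u ≠ w0 := by rintro rfl; exact absurd h1 (ne_of_lt hlt)
    have hsub : ({u, w0} : Finset V) ⊆ G.neighborFinset v := by
      intro z hz; simp only [Finset.mem_insert, Finset.mem_singleton] at hz
      rcases hz with rfl | rfl <;> assumption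
    have hle : ∑ z ∈ ({u, w0} : Finset V), f s(v, z) ≤ ∑ z ∈ G.neighborFinset v, f s(v, z) :=
      Finset.sum_le_sum_of_subset_of_nonneg hsub (fun z _ _ => (hf.1 _).1)
    rw [Finset.sum_pair hne] at hle
    have := hf.2 v
    linarith
  rw [← hf.2 v]
  apply Finset.sum_subset (Finset.filter_subset _ _)
  intro u hu hnot
  simp only [Finset.mem_filter, hu, true_and] at hnot
  rw [fSupp_adj] at hnot
  push_neg at hnot
  have hG : G.Adj v u := by simpa using hu
  rcases (hf.1 s(v, u)).1.lt_or_eq with h | h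
  · exact absurd (flt1 u hu) (not_lt.mpr (hnot hG h))
  · exact h.symm

lemma nbrSet_eq {V : Type*} (G : SimpleGraph V) [G.LocallyFinite] (f : Sym2 V → ℝ) (v : V) :
    (fSupp G f).neighborSet v =
      ↑((G.neighborFinset v).filter (fun u => (fSupp G f).Adj v u)) := by
  ext u
  simp only [SimpleGraph.mem_neighborSet, Finset.coe_filter, Set.mem_setOf_eq,
    SimpleGraph.mem_neighborFinset]
  exact ⟨fun h => ⟨((fSupp_adj G f).mp h).1, h⟩, fun h => h.2⟩

lemma two_nbrs {V : Type*} (G : SimpleGraph V) [G.LocallyFinite] (f : Sym2 V → ℝ)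
    (hf : IsFPM G f) (v p q : V) (hpq : p ≠ q)
    (hp : (fSupp G f).Adj v p) (hq : (fSupp G f).Adj v q)
    (hcard : ((fSupp G f).neighborSet v).ncard = 2) :
    f s(v, p) + f s(v, q) = 1 := by
  set F := (G.neighborFinset v).filter (fun u => (fSupp G f).Adj v u) with hF
  have hpm : p ∈ F := by
    simp only [hF, Finset.mem_filter, SimpleGraph.mem_neighborFinset]
    exact ⟨((fSupp_adj G f).mp hp).1, hp⟩
  have hqm : q ∈ F := by
    simp only [hF, Finset.mem_filter, SimpleGraph.mem_neighborFinset]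
    exact ⟨((fSupp_adj G f).mp hq).1, hq⟩
  have hcard' : F.card = 2 := by
    rw [nbrSet_eq G f v, Set.ncard_coe_finset] at hcard; exact hcard
  have hsub : ({p, q} : Finset V) ⊆ F := by
    intro z hz; simp only [Finset.mem_insert, Finset.mem_singleton] at hz
    rcases hz with rfl | rfl <;> assumption
  have hFeq : F = {p, q} := by
    exact (Finset.eq_of_subset_of_card_le hsub (by rw [hcard', Finset.card_pair hpq])).symm
  have := sum_supp G f hf v p hp
  rw [← hF, hFeq, Finset.sum_pair hpq] at this
  exact this

lemma gt_two_nbrs {V : Type*} (G : SimpleGraph V) [G.LocallyFinite] (f : Sym2 V → ℝ)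
    (hf : IsFPM G f) (v p q : V) (hpq : p ≠ q)
    (hp : (fSupp G f).Adj v p) (hq : (fSupp G f).Adj v q)
    (hcard : 2 < ((fSupp G f).neighborSet v).ncard) :
    f s(v, p) + f s(v, q) < 1 := by
  set F := (G.neighborFinset v).filter (fun u => (fSupp G f).Adj v u) with hF
  have hpm : p ∈ F := by
    simp only [hF, Finset.mem_filter, SimpleGraph.mem_neighborFinset]
    exact ⟨((fSupp_adj G f).mp hp).1, hp⟩
  have hqm : q ∈ F := by
    simp only [hF, Finset.mem_filter, SimpleGraph.mem_neighborFinset]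
    exact ⟨((fSupp_adj G f).mp hq).1, hq⟩
  have hcard' : 2 < F.card := by
    rw [nbrSet_eq G f v, Set.ncard_coe_finset] at hcard; exact hcard
  have : ¬ F ⊆ ({p, q} : Finset V) := by
    intro h
    have := Finset.card_le_card h
    have h2 : ({p, q} : Finset V).card = 2 := Finset.card_pair hpq
    omega
  obtain ⟨y, hyF, hy⟩ := Finset.not_subset.mp this
  simp only [Finset.mem_insert, Finset.mem_singleton, not_or] at hy
  have hyadj : (fSupp G f).Adj v y := (Finset.mem_filter.mp hyF).2
  have hypos : 0 < f s(v, y) := ((fSupp_adj G f).mp hyadj).2.1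
  have hsub : ({p, q, y} : Finset V) ⊆ F := by
    intro z hz
    simp only [Finset.mem_insert, Finset.mem_singleton] at hz
    rcases hz with rfl | rfl | rfl <;> assumption
  have hle : ∑ z ∈ ({p, q, y} : Finset V), f s(v, z) ≤ ∑ z ∈ F, f s(v, z) :=
    Finset.sum_le_sum_of_subset_of_nonneg hsub (fun z _ _ => (hf.1 _).1)
  have hsum3 : ∑ z ∈ ({p, q, y} : Finset V), f s(v, z) = f s(v, p) + f s(v, q) + f s(v, y) := by
    rw [Finset.sum_insert (by simp [hpq, Ne.symm hy.1]),
      Finset.sum_pair (Ne.symm hy.2)]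
    ring
  have := sum_supp G f hf v p hp
  rw [← hF] at this
  linarith [hsum3 ▸ hle, this]

theorem stmt_4 {V : Type*} (G : SimpleGraph V) [G.LocallyFinite] (d : ℕ) (hd : 0 < d)
    (hac : G.IsAcyclic) (f : Sym2 V → ℝ) (hf : IsFPM G f)
    (hvals : ∀ e, ∃ i ≤ d, f e = (i : ℝ) / d)
    (x : ℕ → V) (hinj : Function.Injective x)
    (hray : ∀ n, (fSupp G f).Adj (x n) (x (n + 1)))
    (heven : ∀ n, ((fSupp G f).neighborSet (x (2 * n))).ncard = 2) :
    ∀ n : ℕ,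
      (((fSupp G f).neighborSet (x (2 * n + 1))).ncard = 2 →
        f s(x (2 * (n + 1)), x (2 * (n + 1) + 1)) = f s(x (2 * n), x (2 * n + 1))) ∧
      (2 < ((fSupp G f).neighborSet (x (2 * n + 1))).ncard →
        f s(x (2 * n), x (2 * n + 1)) < f s(x (2 * (n + 1)), x (2 * (n + 1) + 1))) := by
  intro n
  have e1 : 2 * (n + 1) = 2 * n + 2 := by ring
  have e2 : 2 * (n + 1) + 1 = 2 * n + 3 := by ring
  rw [e2, e1]
  set a := x (2 * n) with ha
  set v := x (2 * n + 1) with hv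
  set b := x (2 * n + 2) with hb
  set c := x (2 * n + 3) with hc
  have hav : (fSupp G f).Adj a v := hray (2 * n)
  have hvb : (fSupp G f).Adj v b := by
    have h := hray (2 * n + 1)
    have : 2 * n + 1 + 1 = 2 * n + 2 := by ring
    rwa [this] at h
  have hbc : (fSupp G f).Adj b c := by
    have h := hray (2 * n + 2)
    have : 2 * n + 2 + 1 = 2 * n + 3 := by ring
    rwa [this] at h
  have hab : a ≠ b := fun h => by have := hinj h; omega
  have hvc : v ≠ c := fun h => by have := hinj h; omega
  have heven' : ((fSupp G f).neighborSet b).ncard = 2 := by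
    have h := heven (n + 1); rwa [e1] at h
  have hsum_b : f s(b, v) + f s(b, c) = 1 :=
    two_nbrs G f hf b v c hvc hvb.symm hbc heven'
  have sw1 : f s(v, a) = f s(a, v) := by rw [Sym2.eq_swap]
  have sw2 : f s(b, v) = f s(v, b) := by rw [Sym2.eq_swap]
  constructor
  · intro hdeg
    have hsum_v : f s(v, a) + f s(v, b) = 1 :=
      two_nbrs G f hf v a b hab hav.symm hvb hdeg
    linarith
  · intro hdeg
    have hsum_v : f s(v, a) + f s(v, b) < 1 :=
      gt_two_nbrs G f hf v a b hab hav.symm hvb hdeg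
    linarith
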